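/- arXiv:1910.03197 — 8 statements merged into one kernel-verified Lean document; each statement's English description precedes it below -/
import Mathlib

section
/- Let a_t = (δ/β)(C A^t + D B^t) for t = 0, 1, 2, …, where δ > 0 and β > 0. Then for every integer t ≥ 1, a_{t−1} + ηβ Σ_{i=0}^{t−1} a_i = γ a_t. -/
/-!
With `p = 1 + γ + ηβ`, both `A` and `B` are roots of `γ x² = p x - 1`, so every combination
`u t = P Aᵗ + Q Bᵗ` satisfies `γ u (t + 2) = p u (t + 1) - u t`. The difference of two consecutive
instances of the claimed identity is exactly this recurrence, so it suffices to check `t = 1`, i.e.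
`γ (C A + D B) = (1 + ηβ) (C + D)`. The coefficients are chosen so that `C + D = 1` and
`C A + D B = A + B - 1`, and `γ (A + B) = p` by Vieta.
-/

section QuadraticRoots

variable {K : Type*} [Field K] {γ p s A B : K}

theorem mul_sq_eq_of_eq_quadratic_root [NeZero (2 : K)] (hγ : γ ≠ 0)
    (hs : s ^ 2 = p ^ 2 - 4 * γ) :
    γ * ((p + s) / (2 * γ)) ^ 2 = p * ((p + s) / (2 * γ)) - 1 := by
  field_simp
  linear_combination hs

theorem mul_add_eq_of_quadratic_roots (hA : γ * A ^ 2 = p * A - 1)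
    (hB : γ * B ^ 2 = p * B - 1) (hAB : A ≠ B) : γ * (A + B) = p := by
  apply mul_left_cancel₀ (sub_ne_zero.2 hAB)
  linear_combination hA - hB

theorem sub_one_div_add_one_sub_div (hAB : A ≠ B) :
    (A - 1) / (A - B) + (1 - B) / (A - B) = 1 := by
  rw [← add_div, div_eq_one_iff_eq (sub_ne_zero.2 hAB)]
  ring

theorem sub_one_div_mul_add_one_sub_div_mul (hAB : A ≠ B) :
    (A - 1) / (A - B) * A + (1 - B) / (A - B) * B = A + B - 1 := by
  have := sub_ne_zero.2 hAB
  field_simp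
  ring

end QuadraticRoots

section Recurrence

variable {R : Type*} [CommRing R] {γ : R}

theorem mul_add_pow_add_two_of_quadratic_roots {p A B : R}
    (hA : γ * A ^ 2 = p * A - 1) (hB : γ * B ^ 2 = p * B - 1) (P Q : R) (n : ℕ) :
    γ * (P * A ^ (n + 2) + Q * B ^ (n + 2))
      = p * (P * A ^ (n + 1) + Q * B ^ (n + 1)) - (P * A ^ n + Q * B ^ n) := by
  linear_combination P * A ^ n * hA + Q * B ^ n * hB

theorem add_mul_sum_range_eq_of_recurrence {c : R} {u : ℕ → R}
    (h₀ : γ * u 1 = (1 + c) * u 0)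
    (hrec : ∀ n, γ * u (n + 2) = (1 + γ + c) * u (n + 1) - u n) (n : ℕ) :
    u n + c * ∑ i ∈ Finset.range (n + 1), u i = γ * u (n + 1) := by
  induction n with
  | zero =>
    simp only [zero_add, Finset.sum_range_one]
    linear_combination -h₀
  | succ n ih =>
    rw [Finset.sum_range_succ]
    linear_combination ih - hrec n

end Recurrence

theorem momentum_sequence_identity_general
    (η β γ δ A B C D : ℝ)
    (hη : 0 < η) (hβ : 0 < β) (hγ0 : 0 < γ)
    (hA : A = ((1 + γ + η * β) + Real.sqrt ((1 + γ + η * β) ^ 2 - 4 * γ)) / (2 * γ))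
    (hB : B = ((1 + γ + η * β) - Real.sqrt ((1 + γ + η * β) ^ 2 - 4 * γ)) / (2 * γ))
    (hC : C = (A - 1) / (A - B))
    (hD : D = (1 - B) / (A - B))
    (a : ℕ → ℝ) (ha : ∀ t : ℕ, a t = δ / β * (C * A ^ t + D * B ^ t)) :
    ∀ t : ℕ, 1 ≤ t →
      a (t - 1) + η * β * ∑ i ∈ Finset.range t, a i = γ * a t := by
  set p := 1 + γ + η * β
  set s := Real.sqrt (p ^ 2 - 4 * γ)
  have hdisc : 0 < p ^ 2 - 4 * γ := by nlinarith [mul_pos hη hβ, sq_nonneg (1 - γ)]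
  have hs : s ^ 2 = p ^ 2 - 4 * γ := Real.sq_sqrt hdisc.le
  have hA_root : γ * A ^ 2 = p * A - 1 := hA ▸ mul_sq_eq_of_eq_quadratic_root hγ0.ne' hs
  have hB_root : γ * B ^ 2 = p * B - 1 := by
    rw [hB, sub_eq_add_neg]
    exact mul_sq_eq_of_eq_quadratic_root hγ0.ne' (by rw [neg_sq, hs])
  have hAB : A ≠ B := by
    rw [hA, hB, Ne, div_left_inj' (by positivity)]
    linarith [Real.sqrt_pos.2 hdisc]
  have hsum := mul_add_eq_of_quadratic_roots hA_root hB_root hAB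
  intro t ht
  obtain ⟨n, rfl⟩ := Nat.exists_eq_add_of_le' ht
  rw [Nat.add_sub_cancel]
  refine add_mul_sum_range_eq_of_recurrence ?_ (fun m ↦ ?_) n
  · simp only [ha, pow_zero, pow_one, mul_one, hC, hD, sub_one_div_add_one_sub_div hAB,
      sub_one_div_mul_add_one_sub_div_mul hAB]
    linear_combination δ / β * hsum
  · simp only [ha]
    linear_combination δ / β * mul_add_pow_add_two_of_quadratic_roots hA_root hB_root C D m

/-- With `a_t = (δ/β)(C A^t + D B^t)`, where `A, B` are the two roots of
`γx² − (1+γ+ηβ)x + 1 = 0` and `C = (A−1)/(A−B)`, `D = (1−B)/(A−B)`, one has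
`a_{t−1} + ηβ Σ_{i=0}^{t−1} a_i = γ a_t` for every integer `t ≥ 1`. -/
theorem momentum_sequence_identity
    (η β γ δ A B C D : ℝ)
    (hη : 0 < η) (hβ : 0 < β) (hδ : 0 < δ) (hγ0 : 0 < γ) (hγ1 : γ < 1)
    (hA : A = ((1 + γ + η * β) + Real.sqrt ((1 + γ + η * β) ^ 2 - 4 * γ)) / (2 * γ))
    (hB : B = ((1 + γ + η * β) - Real.sqrt ((1 + γ + η * β) ^ 2 - 4 * γ)) / (2 * γ))
    (hC : C = (A - 1) / (A - B))
    (hD : D = (1 - B) / (A - B))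
    (a : ℕ → ℝ) (ha : ∀ t : ℕ, a t = δ / β * (C * A ^ t + D * B ^ t)) :
    ∀ t : ℕ, 1 ≤ t →
      a (t - 1) + η * β * ∑ i ∈ Finset.range t, a i = γ * a t :=
  momentum_sequence_identity_general η β γ δ A B C D hη hβ hγ0 hA hB hC hD a ha
end

section
/- Let F_i, F : ℝ^n → ℝ be differentiable with F_i β-smooth and ‖∇F(w) − ∇F_i(w)‖ ≤ δ_i for all w. Suppose d̃(t) = γ d̃(t−1) + ∇F_i(w̃(t−1)) and d(t) = γ d(t−1) + ∇F(w(t−1)) for t > t₀, with equal initial momenta d̃(t₀) = d(t₀). Then for every t > t₀: ‖d̃(t) − d(t)‖ ≤ β Σ_{j=0}^{t−t₀−1} γ^j ‖w̃(t−1−j) − w(t−1−j)‖ + δ_i (1 + γ + γ² + … + γ^{t−t₀−1}). -/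
/-- With β-smooth `F_i`, gradient divergence bound `δ_i`, momentum
recursions for `t > t₀` and equal initial momenta at `t₀`, for every `t > t₀`:
`‖d̃(t) − d(t)‖ ≤ β Σ_{j=0}^{t−t₀−1} γ^j ‖w̃(t−1−j) − w(t−1−j)‖ + δ_i Σ_{j=0}^{t−t₀−1} γ^j`. -/
theorem momentum_gap_accumulated
    (n : ℕ) (Fi F : EuclideanSpace ℝ (Fin n) → ℝ)
    (hFi : Differentiable ℝ Fi) (hF : Differentiable ℝ F)
    (β γ δi : ℝ) (hβ : 0 < β) (hγ0 : 0 < γ) (hγ1 : γ < 1) (hδi : 0 ≤ δi)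
    (hsmooth : ∀ w₁ w₂, ‖gradient Fi w₁ - gradient Fi w₂‖ ≤ β * ‖w₁ - w₂‖)
    (hdiv : ∀ w, ‖gradient F w - gradient Fi w‖ ≤ δi)
    (t₀ : ℕ)
    (dtil wtil d w : ℕ → EuclideanSpace ℝ (Fin n))
    (hinit : dtil t₀ = d t₀)
    (hrec₁ : ∀ t : ℕ, t₀ < t → dtil t = γ • dtil (t - 1) + gradient Fi (wtil (t - 1)))
    (hrec₂ : ∀ t : ℕ, t₀ < t → d t = γ • d (t - 1) + gradient F (w (t - 1))) :
    ∀ t : ℕ, t₀ < t →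
      ‖dtil t - d t‖ ≤
        β * ∑ j ∈ Finset.range (t - t₀), γ ^ j * ‖wtil (t - 1 - j) - w (t - 1 - j)‖ +
          δi * ∑ j ∈ Finset.range (t - t₀), γ ^ j := by
  intro t ht
  induction t, ht using Nat.le_induction with
  | base =>
    have h1 := hrec₁ (t₀ + 1) (Nat.lt_succ_self _)
    have h2 := hrec₂ (t₀ + 1) (Nat.lt_succ_self _)
    simp only [Nat.add_sub_cancel] at h1 h2
    rw [h1, h2, hinit]
    have hkey : γ • d t₀ + gradient Fi (wtil t₀) - (γ • d t₀ + gradient F (w t₀))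
        = (gradient Fi (wtil t₀) - gradient Fi (w t₀))
          + (gradient Fi (w t₀) - gradient F (w t₀)) := by abel
    rw [hkey, show t₀ + 1 - t₀ = 1 from by omega]
    simp only [Finset.sum_range_one, pow_zero, one_mul, mul_one,
      Nat.add_sub_cancel, Nat.sub_zero]
    refine (norm_add_le _ _).trans (add_le_add (hsmooth _ _) ?_)
    rw [norm_sub_rev]; exact hdiv _
  | succ t ht IH =>
    have h1 := hrec₁ (t + 1) (by omega)
    have h2 := hrec₂ (t + 1) (by omega)
    simp only [Nat.add_sub_cancel] at h1 h2 ⊢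
    rw [h1, h2]
    have hkey : γ • dtil t + gradient Fi (wtil t) - (γ • d t + gradient F (w t))
        = γ • (dtil t - d t) + ((gradient Fi (wtil t) - gradient Fi (w t))
          + (gradient Fi (w t) - gradient F (w t))) := by
      rw [smul_sub]; abel
    rw [hkey, show t + 1 - t₀ = (t - t₀) + 1 from by omega]
    have hS1 : ∑ j ∈ Finset.range (t - t₀ + 1), γ ^ j * ‖wtil (t - j) - w (t - j)‖
        = γ * ∑ j ∈ Finset.range (t - t₀), γ ^ j * ‖wtil (t - 1 - j) - w (t - 1 - j)‖
          + ‖wtil t - w t‖ := by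
      rw [Finset.sum_range_succ']
      simp only [pow_zero, one_mul, Nat.sub_zero, pow_succ, Finset.mul_sum]
      congr 1
      refine Finset.sum_congr rfl fun j _ => ?_
      rw [show t - (j + 1) = t - 1 - j from by omega]; ring
    have hS2 : ∑ j ∈ Finset.range (t - t₀ + 1), γ ^ j
        = γ * ∑ j ∈ Finset.range (t - t₀), γ ^ j + 1 := by
      rw [Finset.sum_range_succ']
      simp only [pow_zero, pow_succ, Finset.mul_sum]
      congr 1
      exact Finset.sum_congr rfl fun j _ => by ring
    rw [hS1, hS2]
    have step : ‖γ • (dtil t - d t) + ((gradient Fi (wtil t) - gradient Fi (w t))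
          + (gradient Fi (w t) - gradient F (w t)))‖
        ≤ γ * ‖dtil t - d t‖ + (β * ‖wtil t - w t‖ + δi) := by
      refine (norm_add_le _ _).trans (add_le_add ?_ ?_)
      · rw [norm_smul, Real.norm_eq_abs, abs_of_pos hγ0]
      · refine (norm_add_le _ _).trans (add_le_add (hsmooth _ _) ?_)
        rw [norm_sub_rev]; exact hdiv _
    refine step.trans ?_
    have := mul_le_mul_of_nonneg_left IH (le_of_lt hγ0)
    nlinarith [norm_nonneg (wtil t - w t)]
end

section
/- Suppose node i's sequences satisfy d̃_i(t) = γ d̃_i(t−1) + ∇F_i(w̃_i(t−1)), w̃_i(t) = w̃_i(t−1) − η d̃_i(t), and the centralized sequences satisfy d(t) = γ d(t−1) + ∇F(w(t−1)), w(t) = w(t−1) − η d(t), for (k−1)τ < t ≤ kτ, with equal initial values d̃_i((k−1)τ) = d((k−1)τ) and w̃_i((k−1)τ) = w((k−1)τ). If F_i is β-smooth and ‖∇F(w) − ∇F_i(w)‖ ≤ δ_i for all w, then for all t with (k−1)τ ≤ t ≤ kτ: ‖w̃_i(t) − w(t)‖ ≤ f_i(t − (k−1)τ), where f_i(x) = (δ_i/β)(γ^x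 (C A^x + D B^x) − 1). -/
/-!
The gaps `‖dtil t - d t‖` and `‖wtil t - w t‖` obey
`‖Δd t‖ ≤ γ ‖Δd (t-1)‖ + β ‖Δw (t-1)‖ + δ` and `‖Δw t‖ ≤ ‖Δw (t-1)‖ + η ‖Δd t‖`,
so they are dominated by the solution of the same linear system with equalities, started at zero.
That system is diagonalised by `x = γ A` and `y = γ B`, the roots of `X² - (1 + γ + η β) X + γ`:
its solution is `δ (xʲ - yʲ) / (x - y)` for the velocities and `δ / β (C xʲ + D yʲ - 1)`
for the iterates.
-/

section QuadraticRoots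

variable {γ p A B : ℝ}

theorem add_eq_of_quadratic_roots (hγ : γ ≠ 0) (hA : A = (p + √(p ^ 2 - 4 * γ)) / (2 * γ))
    (hB : B = (p - √(p ^ 2 - 4 * γ)) / (2 * γ)) : γ * A + γ * B = p := by
  subst hA hB
  field_simp
  ring

theorem mul_eq_of_quadratic_roots (hγ : γ ≠ 0) (hdisc : 0 ≤ p ^ 2 - 4 * γ)
    (hA : A = (p + √(p ^ 2 - 4 * γ)) / (2 * γ)) (hB : B = (p - √(p ^ 2 - 4 * γ)) / (2 * γ)) :
    γ * A * (γ * B) = γ := by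
  have hs := Real.sq_sqrt hdisc
  generalize √(p ^ 2 - 4 * γ) = s at hA hB hs
  subst hA hB
  field_simp
  linear_combination -hs

theorem ne_of_quadratic_roots (hγ : γ ≠ 0) (hdisc : 0 < p ^ 2 - 4 * γ)
    (hA : A = (p + √(p ^ 2 - 4 * γ)) / (2 * γ)) (hB : B = (p - √(p ^ 2 - 4 * γ)) / (2 * γ)) :
    A ≠ B := by
  subst hA hB
  intro h
  field_simp at h
  linarith [Real.sqrt_pos.mpr hdisc]

end QuadraticRoots

section Majorant

variable {x y γ η β δ C D : ℝ}

theorem add_eq_one_of_eq_div_sub (hxy : x ≠ y) (hC : C = (x - γ) / (x - y))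
    (hD : D = (γ - y) / (x - y)) : C + D = 1 := by
  rw [hC, hD, ← add_div, sub_add_sub_cancel, div_self (sub_ne_zero.mpr hxy)]

theorem momentum_majorant_velocity_succ (hprod : x * y = γ) (hxy : x ≠ y)
    (hC : C = (x - γ) / (x - y)) (hD : D = (γ - y) / (x - y)) (hβ : β ≠ 0) (j : ℕ) :
    δ * (x ^ (j + 1) - y ^ (j + 1)) / (x - y) =
      γ * (δ * (x ^ j - y ^ j) / (x - y)) + β * (δ / β * (C * x ^ j + D * y ^ j - 1)) + δ := by
  have : x - y ≠ 0 := sub_ne_zero.mpr hxy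
  subst hC hD hprod
  field_simp
  ring

theorem momentum_majorant_iterate_succ (hsum : x + y = 1 + γ + η * β) (hprod : x * y = γ)
    (hxy : x ≠ y) (hC : C = (x - γ) / (x - y)) (hD : D = (γ - y) / (x - y)) (hβ : β ≠ 0)
    (j : ℕ) :
    δ / β * (C * x ^ (j + 1) + D * y ^ (j + 1) - 1) =
      δ / β * (C * x ^ j + D * y ^ j - 1) + η * (δ * (x ^ (j + 1) - y ^ (j + 1)) / (x - y)) := by
  have : x - y ≠ 0 := sub_ne_zero.mpr hxy
  have hηβ : η * β = x + y - 1 - x * y := by linarith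
  subst hC hD hprod
  field_simp
  linear_combination (-(δ * (x ^ (j + 1) - y ^ (j + 1)))) * hηβ

end Majorant

section Comparison

theorem norm_sub_le_of_lipschitz_of_close {E F : Type*} [SeminormedAddCommGroup E]
    [SeminormedAddCommGroup F] {f g : E → F} {β δ : ℝ}
    (hf : ∀ x y, ‖f x - f y‖ ≤ β * ‖x - y‖) (hfg : ∀ x, ‖g x - f x‖ ≤ δ) (x y : E) :
    ‖f x - g y‖ ≤ β * ‖x - y‖ + δ :=
  calc ‖f x - g y‖ ≤ ‖f x - f y‖ + ‖f y - g y‖ := norm_sub_le_norm_sub_add_norm_sub _ _ _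
    _ ≤ β * ‖x - y‖ + δ := add_le_add (hf x y) (norm_sub_rev (g y) (f y) ▸ hfg y)

variable {E : Type*} [SeminormedAddCommGroup E] [NormedSpace ℝ E]

theorem momentum_iterates_norm_sub_le {g₁ g₂ : E → E} {γ η β δ : ℝ} (hγ : 0 ≤ γ) (hη : 0 ≤ η)
    (hβ : 0 ≤ β) (hg : ∀ x y, ‖g₁ x - g₂ y‖ ≤ β * ‖x - y‖ + δ) {d₁ w₁ d₂ w₂ : ℕ → E} {m M : ℕ}
    (h₁ : ∀ s, m ≤ s → s < M →
      d₁ (s + 1) = γ • d₁ s + g₁ (w₁ s) ∧ w₁ (s + 1) = w₁ s - η • d₁ (s + 1))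
    (h₂ : ∀ s, m ≤ s → s < M →
      d₂ (s + 1) = γ • d₂ s + g₂ (w₂ s) ∧ w₂ (s + 1) = w₂ s - η • d₂ (s + 1))
    {a b : ℕ → ℝ} (hb₀ : ‖d₁ m - d₂ m‖ ≤ b 0) (ha₀ : ‖w₁ m - w₂ m‖ ≤ a 0)
    (hb : ∀ j, γ * b j + β * a j + δ ≤ b (j + 1)) (ha : ∀ j, a j + η * b (j + 1) ≤ a (j + 1)) :
    ∀ j, m + j ≤ M → ‖d₁ (m + j) - d₂ (m + j)‖ ≤ b j ∧ ‖w₁ (m + j) - w₂ (m + j)‖ ≤ a j := by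
  intro j
  induction j with
  | zero => exact fun _ => ⟨hb₀, ha₀⟩
  | succ j ih =>
    intro hjM
    obtain ⟨ihd, ihw⟩ := ih (by omega)
    obtain ⟨hd₁, hw₁⟩ := h₁ (m + j) (by omega) (by omega)
    obtain ⟨hd₂, hw₂⟩ := h₂ (m + j) (by omega) (by omega)
    set s := m + j
    have hd : ‖d₁ (s + 1) - d₂ (s + 1)‖ ≤ b (j + 1) :=
      calc ‖d₁ (s + 1) - d₂ (s + 1)‖ = ‖γ • (d₁ s - d₂ s) + (g₁ (w₁ s) - g₂ (w₂ s))‖ := by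
            rw [hd₁, hd₂, smul_sub]; abel_nf
        _ ≤ γ * ‖d₁ s - d₂ s‖ + (β * ‖w₁ s - w₂ s‖ + δ) := by
            grw [norm_add_le, norm_smul, Real.norm_of_nonneg hγ, hg]
        _ ≤ b (j + 1) := by grw [ihd, ihw]; linarith [hb j]
    refine ⟨hd, ?_⟩
    calc ‖w₁ (s + 1) - w₂ (s + 1)‖ = ‖(w₁ s - w₂ s) - η • (d₁ (s + 1) - d₂ (s + 1))‖ := by
          rw [hw₁, hw₂, smul_sub]; abel_nf
      _ ≤ ‖w₁ s - w₂ s‖ + η * ‖d₁ (s + 1) - d₂ (s + 1)‖ := by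
          grw [norm_sub_le, norm_smul, Real.norm_of_nonneg hη]
      _ ≤ a (j + 1) := by grw [ihw, hd]; exact ha j

end Comparison

theorem local_parameter_gap_bound_general
    (n : ℕ) (Fi F : EuclideanSpace ℝ (Fin n) → ℝ)
    (η β γ δi : ℝ) (hη : 0 < η) (hβ : 0 < β) (hγ0 : 0 < γ)
    (hsmooth : ∀ w₁ w₂, ‖gradient Fi w₁ - gradient Fi w₂‖ ≤ β * ‖w₁ - w₂‖)
    (hdiv : ∀ v, ‖gradient F v - gradient Fi v‖ ≤ δi)
    (A B C D : ℝ)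
    (hA : A = ((1 + γ + η * β) + Real.sqrt ((1 + γ + η * β) ^ 2 - 4 * γ)) / (2 * γ))
    (hB : B = ((1 + γ + η * β) - Real.sqrt ((1 + γ + η * β) ^ 2 - 4 * γ)) / (2 * γ))
    (hC : C = (A - 1) / (A - B))
    (hD : D = (1 - B) / (A - B))
    (τ k : ℕ)
    (dtil wtil d w : ℕ → EuclideanSpace ℝ (Fin n))
    (hinit_d : dtil ((k - 1) * τ) = d ((k - 1) * τ))
    (hinit_w : wtil ((k - 1) * τ) = w ((k - 1) * τ))
    (hrec_loc : ∀ t : ℕ, (k - 1) * τ < t → t ≤ k * τ →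
      dtil t = γ • dtil (t - 1) + gradient Fi (wtil (t - 1)) ∧
      wtil t = wtil (t - 1) - η • dtil t)
    (hrec_cen : ∀ t : ℕ, (k - 1) * τ < t → t ≤ k * τ →
      d t = γ • d (t - 1) + gradient F (w (t - 1)) ∧
      w t = w (t - 1) - η • d t) :
    ∀ t : ℕ, (k - 1) * τ ≤ t → t ≤ k * τ →
      ‖wtil t - w t‖ ≤
        δi / β * (γ ^ (t - (k - 1) * τ) *
          (C * A ^ (t - (k - 1) * τ) + D * B ^ (t - (k - 1) * τ)) - 1) := by
  intro t hmt htM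
  set m := (k - 1) * τ
  have hdisc : 0 < (1 + γ + η * β) ^ 2 - 4 * γ := by
    nlinarith [mul_pos hη hβ, sq_nonneg (1 - γ)]
  set x := γ * A
  set y := γ * B
  have hprod : x * y = γ := mul_eq_of_quadratic_roots hγ0.ne' hdisc.le hA hB
  have hxy : x ≠ y := (mul_right_injective₀ hγ0.ne').ne (ne_of_quadratic_roots hγ0.ne' hdisc hA hB)
  have hC' : C = (x - γ) / (x - y) := by
    rw [hC, ← mul_sub_one, ← mul_sub, mul_div_mul_left _ _ hγ0.ne']
  have hD' : D = (γ - y) / (x - y) := by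
    rw [hD, ← mul_one_sub, ← mul_sub, mul_div_mul_left _ _ hγ0.ne']
  have key := momentum_iterates_norm_sub_le hγ0.le hη.le hβ.le
    (norm_sub_le_of_lipschitz_of_close hsmooth hdiv) (m := m) (M := k * τ)
    (fun s _ _ => by simpa using hrec_loc (s + 1) (by omega) (by omega))
    (fun s _ _ => by simpa using hrec_cen (s + 1) (by omega) (by omega))
    (a := fun j => δi / β * (C * x ^ j + D * y ^ j - 1))
    (b := fun j => δi * (x ^ j - y ^ j) / (x - y))
    (by simp [hinit_d]) (by simp [hinit_w, add_eq_one_of_eq_div_sub hxy hC' hD'])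
    (fun j => (momentum_majorant_velocity_succ hprod hxy hC' hD' hβ.ne' j).ge)
    (fun j => (momentum_majorant_iterate_succ (add_eq_of_quadratic_roots hγ0.ne' hA hB) hprod
      hxy hC' hD' hβ.ne' j).ge)
    (t - m) (by omega)
  rw [Nat.add_sub_cancel' hmt] at key
  simpa only [x, y, mul_pow, mul_add, mul_left_comm] using key.2

/-- Over an aggregation interval `[(k−1)τ, kτ]`, if node `i`'s sequences
and the centralized sequences follow the MGD recursions with equal initial values
at `(k−1)τ`, `F_i` is β-smooth and `‖∇F(w) − ∇F_i(w)‖ ≤ δ_i`, then for all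
`(k−1)τ ≤ t ≤ kτ`: `‖w̃_i(t) − w(t)‖ ≤ f_i(t − (k−1)τ)` where
`f_i(x) = (δ_i/β)(γ^x (C A^x + D B^x) − 1)`. -/
theorem local_parameter_gap_bound
    (n : ℕ) (Fi F : EuclideanSpace ℝ (Fin n) → ℝ)
    (hFi : Differentiable ℝ Fi) (hF : Differentiable ℝ F)
    (η β γ δi : ℝ) (hη : 0 < η) (hβ : 0 < β) (hγ0 : 0 < γ) (hγ1 : γ < 1) (hδi : 0 ≤ δi)
    (hsmooth : ∀ w₁ w₂, ‖gradient Fi w₁ - gradient Fi w₂‖ ≤ β * ‖w₁ - w₂‖)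
    (hdiv : ∀ v, ‖gradient F v - gradient Fi v‖ ≤ δi)
    (A B C D : ℝ)
    (hA : A = ((1 + γ + η * β) + Real.sqrt ((1 + γ + η * β) ^ 2 - 4 * γ)) / (2 * γ))
    (hB : B = ((1 + γ + η * β) - Real.sqrt ((1 + γ + η * β) ^ 2 - 4 * γ)) / (2 * γ))
    (hC : C = (A - 1) / (A - B))
    (hD : D = (1 - B) / (A - B))
    (τ k : ℕ) (hτ : 1 ≤ τ) (hk : 1 ≤ k)
    (dtil wtil d w : ℕ → EuclideanSpace ℝ (Fin n))
    (hinit_d : dtil ((k - 1) * τ) = d ((k - 1) * τ))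
    (hinit_w : wtil ((k - 1) * τ) = w ((k - 1) * τ))
    (hrec_loc : ∀ t : ℕ, (k - 1) * τ < t → t ≤ k * τ →
      dtil t = γ • dtil (t - 1) + gradient Fi (wtil (t - 1)) ∧
      wtil t = wtil (t - 1) - η • dtil t)
    (hrec_cen : ∀ t : ℕ, (k - 1) * τ < t → t ≤ k * τ →
      d t = γ • d (t - 1) + gradient F (w (t - 1)) ∧
      w t = w (t - 1) - η • d t) :
    ∀ t : ℕ, (k - 1) * τ ≤ t → t ≤ k * τ →
      ‖wtil t - w t‖ ≤
        δi / β * (γ ^ (t - (k - 1) * τ) *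
          (C * A ^ (t - (k - 1) * τ) + D * B ^ (t - (k - 1) * τ)) - 1) :=
  local_parameter_gap_bound_general n Fi F η β γ δi hη hβ hγ0 hsmooth hdiv A B C D hA hB hC hD τ k
    dtil wtil d w hinit_d hinit_w hrec_loc hrec_cen
end

section
/- In the MFL system, for every interval index k and every t with (k−1)τ < t ≤ kτ, the global MFL momentum and the centralized MGD momentum satisfy ‖d(t) − d_[k](t)‖ ≤ δ[ C(γA)^{t₀}/(γ(A−1)) + D(γB)^{t₀}/(γ(B−1)) − (γ^{t₀} − 1)/(γ − 1) ], where t₀ = t − (k−1)τ. -/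
/-!
During a round every node runs momentum gradient descent from the common averaged state, with
`∇F` replaced by `∇F_i`, which is `β`-Lipschitz and within `δ_i` of `∇F`. By induction its
momentum and parameter stay within `δ_i p(s)` and `δ_i q(s)` of the centralized run, where
`p(s+1) = γ p(s) + β q(s) + 1` and `q(s+1) = q(s) + η p(s+1)`; the roots `A`, `B` of
`γx² − (1+γ+ηβ)x + 1` solve this recursion in closed form. In the weighted average the gradient
dissimilarities cancel, since `∇F = Σ ρ_i ∇F_i`, so the global momentum gap only obeys
`e(s+1) ≤ γ e(s) + β δ q(s)`, without the drift `1`; hence `e(s) ≤ δ (p(s) − Σ_{j<s} γ^j)`.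
-/

open Finset

theorem gradient_sum_const_mul {ι E : Type*} [NormedAddCommGroup E] [InnerProductSpace ℝ E]
    [CompleteSpace E] (s : Finset ι) (ρ : ι → ℝ) {F : ι → E → ℝ} {x : E}
    (hF : ∀ i ∈ s, DifferentiableAt ℝ (F i) x) :
    gradient (fun z => ∑ i ∈ s, ρ i * F i z) x = ∑ i ∈ s, ρ i • gradient (F i) x := by
  refine HasGradientAt.gradient ?_
  rw [hasGradientAt_iff_hasFDerivAt, map_sum]
  simp only [map_smul]
  exact HasFDerivAt.fun_sum fun i hi => (hF i hi).hasGradientAt.hasFDerivAt.const_mul (ρ i)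

section RoundRun

variable {α : Type*}

/-- The iterates of a node during the round starting at the synchronisation time `ts`, which
starts from the averaged state `x ts` rather than from the node's own `xᵢ ts`. -/
def roundRun (x xᵢ : ℕ → α) (ts r : ℕ) : α := if r = 0 then x ts else xᵢ (ts + r)

@[simp] theorem roundRun_zero (x xᵢ : ℕ → α) (ts : ℕ) : roundRun x xᵢ ts 0 = x ts := rfl

@[simp] theorem roundRun_succ (x xᵢ : ℕ → α) (ts r : ℕ) :
    roundRun x xᵢ ts (r + 1) = xᵢ (ts + r + 1) := by
  simp [roundRun, add_assoc]

theorem ite_dvd_eq_roundRun {τ ts r : ℕ} (hts : τ ∣ ts) (hr : r < τ) (x xᵢ : ℕ → α) :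
    (if τ ∣ ts + r then x (ts + r) else xᵢ (ts + r)) = roundRun x xᵢ ts r := by
  rcases Nat.eq_zero_or_pos r with rfl | hr₀
  · simp [roundRun, hts]
  · have hndvd : ¬ τ ∣ ts + r := fun h =>
      hr₀.ne' (Nat.eq_zero_of_dvd_of_lt ((Nat.dvd_add_right hts).mp h) hr)
    simp [roundRun, hndvd, hr₀.ne']

theorem roundRun_momentum_step {E : Type*} [AddCommGroup E] [Module ℝ E] {τ ts r : ℕ}
    (hts : τ ∣ ts) (hr : r < τ) {γ η : ℝ} {g : E → E} {d w dᵢ wᵢ : ℕ → E}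
    (hd : ∀ t, dᵢ (t + 1) = γ • (if τ ∣ t then d t else dᵢ t) + g (if τ ∣ t then w t else wᵢ t))
    (hw : ∀ t, wᵢ (t + 1) = (if τ ∣ t then w t else wᵢ t) - η • dᵢ (t + 1)) :
    roundRun d dᵢ ts (r + 1) = γ • roundRun d dᵢ ts r + g (roundRun w wᵢ ts r) ∧
      roundRun w wᵢ ts (r + 1) = roundRun w wᵢ ts r - η • roundRun d dᵢ ts (r + 1) := by
  simp only [roundRun_succ, ← ite_dvd_eq_roundRun hts hr]
  exact ⟨hd _, hw _⟩

theorem sum_smul_roundRun {ι E : Type*} [Fintype ι] [AddCommMonoid E] [Module ℝ E]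
    {ρ : ι → ℝ} (hρ : ∑ i, ρ i = 1) {x : ℕ → E} {xᵢ : ι → ℕ → E}
    (hx : ∀ t, x t = ∑ i, ρ i • xᵢ i t) (ts r : ℕ) :
    ∑ i, ρ i • roundRun x (xᵢ i) ts r = x (ts + r) := by
  rcases Nat.eq_zero_or_pos r with rfl | hr₀
  · simp [← sum_smul, hρ]
  · simp [roundRun, hr₀.ne', hx]

end RoundRun

section Coefficients

variable (γ β A B : ℝ)

noncomputable def mgdMomentumGapCoeff (s : ℕ) : ℝ := ((γ * A) ^ s - (γ * B) ^ s) / (γ * (A - B))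

noncomputable def mgdParamGapCoeff (s : ℕ) : ℝ :=
  ((A - 1) * (γ * A) ^ s + (1 - B) * (γ * B) ^ s - (A - B)) / (β * (A - B))

variable {γ β A B}

theorem mgdMomentumGapCoeff_zero : mgdMomentumGapCoeff γ A B 0 = 0 := by
  simp [mgdMomentumGapCoeff]

theorem mgdParamGapCoeff_zero : mgdParamGapCoeff γ β A B 0 = 0 := by
  simp [mgdParamGapCoeff]

theorem mgdMomentumGapCoeff_succ (hγ : γ ≠ 0) (hβ : β ≠ 0) (hAB : A ≠ B) (s : ℕ) :
    mgdMomentumGapCoeff γ A B (s + 1) =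
      γ * mgdMomentumGapCoeff γ A B s + β * mgdParamGapCoeff γ β A B s + 1 := by
  have := sub_ne_zero.mpr hAB
  simp only [mgdMomentumGapCoeff, mgdParamGapCoeff]
  field_simp
  ring

theorem mgdParamGapCoeff_succ {η : ℝ} (hγ : γ ≠ 0) (hβ : β ≠ 0) (hAB : A ≠ B)
    (hA : γ * A ^ 2 - (1 + γ + η * β) * A + 1 = 0) (hB : γ * B ^ 2 - (1 + γ + η * β) * B + 1 = 0)
    (s : ℕ) :
    mgdParamGapCoeff γ β A B (s + 1) =
      mgdParamGapCoeff γ β A B s + η * mgdMomentumGapCoeff γ A B (s + 1) := by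
  have := sub_ne_zero.mpr hAB
  simp only [mgdMomentumGapCoeff, mgdParamGapCoeff]
  field_simp
  linear_combination γ * (γ * A) ^ s * hA - γ * (γ * B) ^ s * hB

theorem partialFraction_eq_mgdMomentumGapCoeff (hγ : γ ≠ 0) (hAB : A ≠ B) (hA : A ≠ 1)
    (hB : B ≠ 1) (s : ℕ) :
    (A - 1) / (A - B) * (γ * A) ^ s / (γ * (A - 1)) +
      (1 - B) / (A - B) * (γ * B) ^ s / (γ * (B - 1)) = mgdMomentumGapCoeff γ A B s := by
  have := sub_ne_zero.mpr hAB
  have := sub_ne_zero.mpr hA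
  have := sub_ne_zero.mpr hB
  simp only [mgdMomentumGapCoeff]
  field_simp
  ring

theorem ne_one_of_charPoly_eq_zero {γ η β x : ℝ} (hηβ : η * β ≠ 0)
    (hx : γ * x ^ 2 - (1 + γ + η * β) * x + 1 = 0) : x ≠ 1 := by
  rintro rfl
  exact hηβ (by linear_combination -hx)

end Coefficients

section MomentumDescent

variable {E : Type*} [SeminormedAddCommGroup E] [NormedSpace ℝ E] {γ η β : ℝ} {p q : ℕ → ℝ}

theorem momentum_descent_gap_le (hγ : 0 ≤ γ) (hη : 0 ≤ η) (hβ : 0 ≤ β)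
    (hp0 : p 0 = 0) (hq0 : q 0 = 0) (hp : ∀ s, p (s + 1) = γ * p s + β * q s + 1)
    (hq : ∀ s, q (s + 1) = q s + η * p (s + 1))
    {G₁ G₂ : E → E} {ε : ℝ} (hG₁ : ∀ u v, ‖G₁ u - G₁ v‖ ≤ β * ‖u - v‖)
    (hG : ∀ v, ‖G₂ v - G₁ v‖ ≤ ε) {d₁ w₁ d₂ w₂ : ℕ → E} (hd₀ : d₁ 0 = d₂ 0) (hw₀ : w₁ 0 = w₂ 0)
    {s : ℕ} (h₁ : ∀ r < s, d₁ (r + 1) = γ • d₁ r + G₁ (w₁ r) ∧ w₁ (r + 1) = w₁ r - η • d₁ (r + 1))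
    (h₂ : ∀ r < s, d₂ (r + 1) = γ • d₂ r + G₂ (w₂ r) ∧ w₂ (r + 1) = w₂ r - η • d₂ (r + 1)) :
    ‖d₁ s - d₂ s‖ ≤ ε * p s ∧ ‖w₁ s - w₂ s‖ ≤ ε * q s := by
  induction s with
  | zero => simp [hd₀, hw₀, hp0, hq0]
  | succ s ih =>
    obtain ⟨hd, hw⟩ := ih (fun r hr => h₁ r (by omega)) (fun r hr => h₂ r (by omega))
    obtain ⟨hd₁, hw₁⟩ := h₁ s s.lt_succ_self
    obtain ⟨hd₂, hw₂⟩ := h₂ s s.lt_succ_self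
    have hd' : ‖d₁ (s + 1) - d₂ (s + 1)‖ ≤ ε * p (s + 1) := calc
      ‖d₁ (s + 1) - d₂ (s + 1)‖
          = ‖γ • (d₁ s - d₂ s) + (G₁ (w₁ s) - G₁ (w₂ s)) + (G₁ (w₂ s) - G₂ (w₂ s))‖ := by
            rw [hd₁, hd₂, smul_sub]; abel_nf
      _ ≤ γ * (ε * p s) + β * (ε * q s) + ε := by
            refine norm_add₃_le.trans (add_le_add_three ?_ ?_ ?_)
            · rw [norm_smul, Real.norm_of_nonneg hγ]; exact mul_le_mul_of_nonneg_left hd hγ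
            · exact (hG₁ _ _).trans (mul_le_mul_of_nonneg_left hw hβ)
            · rw [norm_sub_rev]; exact hG _
      _ = ε * p (s + 1) := by rw [hp]; ring
    refine ⟨hd', ?_⟩
    calc ‖w₁ (s + 1) - w₂ (s + 1)‖ = ‖(w₁ s - w₂ s) - η • (d₁ (s + 1) - d₂ (s + 1))‖ := by
          rw [hw₁, hw₂, smul_sub]; abel_nf
      _ ≤ ε * q s + η * (ε * p (s + 1)) := by
          refine (norm_sub_le _ _).trans (add_le_add hw ?_)
          rw [norm_smul, Real.norm_of_nonneg hη]; exact mul_le_mul_of_nonneg_left hd' hη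
      _ = ε * q (s + 1) := by rw [hq]; ring

theorem averaged_momentum_descent_gap_le {ι : Type*} [Fintype ι] (hγ : 0 ≤ γ) (hη : 0 ≤ η)
    (hβ : 0 ≤ β) (hp0 : p 0 = 0) (hq0 : q 0 = 0) (hp : ∀ s, p (s + 1) = γ * p s + β * q s + 1)
    (hq : ∀ s, q (s + 1) = q s + η * p (s + 1)) {ρ δ : ι → ℝ} (hρ : ∀ i, 0 ≤ ρ i)
    (hρ₁ : ∑ i, ρ i = 1) {G : E → E} {Gᵢ : ι → E → E} (hG : ∀ v, G v = ∑ i, ρ i • Gᵢ i v)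
    (hGᵢ : ∀ i u v, ‖Gᵢ i u - Gᵢ i v‖ ≤ β * ‖u - v‖) (hδ : ∀ i v, ‖G v - Gᵢ i v‖ ≤ δ i)
    {d w : ι → ℕ → E} {dc wc : ℕ → E} (hd₀ : ∀ i, d i 0 = dc 0) (hw₀ : ∀ i, w i 0 = wc 0)
    {s : ℕ} (hloc : ∀ i, ∀ r < s,
      d i (r + 1) = γ • d i r + Gᵢ i (w i r) ∧ w i (r + 1) = w i r - η • d i (r + 1))
    (hc : ∀ r < s, dc (r + 1) = γ • dc r + G (wc r) ∧ wc (r + 1) = wc r - η • dc (r + 1)) :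
    ‖∑ i, ρ i • d i s - dc s‖ ≤ (∑ i, ρ i * δ i) * (p s - ∑ j ∈ range s, γ ^ j) := by
  induction s with
  | zero => simp [hd₀, ← sum_smul, hρ₁, hp0]
  | succ s ih =>
    have hw : ∀ i, ‖w i s - wc s‖ ≤ δ i * q s := fun i =>
      (momentum_descent_gap_le hγ hη hβ hp0 hq0 hp hq (hGᵢ i) (hδ i) (hd₀ i) (hw₀ i)
        (fun r hr => hloc i r (by omega)) (fun r hr => hc r (by omega))).2
    have hstep : ∑ i, ρ i • d i (s + 1) - dc (s + 1) =
        γ • (∑ i, ρ i • d i s - dc s) + ∑ i, ρ i • (Gᵢ i (w i s) - Gᵢ i (wc s)) := by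
      rw [(hc s s.lt_succ_self).1, hG]
      simp only [fun i => (hloc i s s.lt_succ_self).1, smul_add, smul_sub, sum_add_distrib,
        sum_sub_distrib, smul_sum, smul_comm γ]
      abel
    calc ‖∑ i, ρ i • d i (s + 1) - dc (s + 1)‖
        ≤ γ * ((∑ i, ρ i * δ i) * (p s - ∑ j ∈ range s, γ ^ j)) + ∑ i, ρ i * (β * (δ i * q s)) := by
          rw [hstep]
          refine (norm_add_le _ _).trans (add_le_add ?_ (norm_sum_le_of_le _ fun i _ => ?_))
          · rw [norm_smul, Real.norm_of_nonneg hγ]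
            exact mul_le_mul_of_nonneg_left (ih (fun i r hr => hloc i r (by omega))
              (fun r hr => hc r (by omega))) hγ
          · rw [norm_smul, Real.norm_of_nonneg (hρ i)]
            exact mul_le_mul_of_nonneg_left ((hGᵢ i _ _).trans
              (mul_le_mul_of_nonneg_left (hw i) hβ)) (hρ i)
      _ = (∑ i, ρ i * δ i) * (p (s + 1) - ∑ j ∈ range (s + 1), γ ^ j) := by
          have hsum : ∑ i, ρ i * (β * (δ i * q s)) = (∑ i, ρ i * δ i) * (β * q s) := by
            rw [sum_mul]; exact sum_congr rfl fun i _ => by ring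
          rw [hsum, hp, geom_sum_succ]; ring

end MomentumDescent

theorem mfl_momentum_gap_to_centralized_mgd_general
    (n N : ℕ) (ρw : Fin N → ℝ) (hρpos : ∀ i, 0 < ρw i) (hρsum : ∑ i, ρw i = 1)
    (Floc : Fin N → EuclideanSpace ℝ (Fin n) → ℝ)
    (hdiff : ∀ i, Differentiable ℝ (Floc i))
    (η β γ : ℝ) (hη : 0 < η) (hβ : 0 < β) (hγ0 : 0 < γ) (hγ1 : γ < 1)
    (hsmooth : ∀ i w₁ w₂, ‖gradient (Floc i) w₁ - gradient (Floc i) w₂‖ ≤ β * ‖w₁ - w₂‖)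
    (Fg : EuclideanSpace ℝ (Fin n) → ℝ)
    (hFg : ∀ v, Fg v = ∑ i, ρw i * Floc i v)
    (δi : Fin N → ℝ)
    (hδi : ∀ i v, ‖gradient Fg v - gradient (Floc i) v‖ ≤ δi i)
    (δ : ℝ) (hδ : δ = ∑ i, ρw i * δi i)
    (τ : ℕ)
    -- MFL local sequences and their weighted averages
    (wtil dtil : Fin N → ℕ → EuclideanSpace ℝ (Fin n))
    (w d : ℕ → EuclideanSpace ℝ (Fin n))
    (hdavg : ∀ t, d t = ∑ i, ρw i • dtil i t)
    -- local update: nodes are reset to the averages whenever τ ∣ t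
    (hup_d : ∀ i, ∀ t : ℕ, dtil i (t + 1) =
      γ • (if τ ∣ t then d t else dtil i t) +
        gradient (Floc i) (if τ ∣ t then w t else wtil i t))
    (hup_w : ∀ i, ∀ t : ℕ, wtil i (t + 1) =
      (if τ ∣ t then w t else wtil i t) - η • dtil i (t + 1))
    -- per-interval centralized MGD sequences
    (wk dk : ℕ → ℕ → EuclideanSpace ℝ (Fin n))
    (hk_init : ∀ k : ℕ, 1 ≤ k →
      dk k ((k - 1) * τ) = d ((k - 1) * τ) ∧ wk k ((k - 1) * τ) = w ((k - 1) * τ))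
    (hk_up : ∀ k : ℕ, 1 ≤ k → ∀ t : ℕ, (k - 1) * τ < t → t ≤ k * τ →
      dk k t = γ • dk k (t - 1) + gradient Fg (wk k (t - 1)) ∧
      wk k t = wk k (t - 1) - η • dk k t)
    -- the roots A > B of γx² − (1+γ+ηβ)x + 1 = 0 and the constants C, D
    (A B C D : ℝ)
    (hA : γ * A ^ 2 - (1 + γ + η * β) * A + 1 = 0)
    (hB : γ * B ^ 2 - (1 + γ + η * β) * B + 1 = 0)
    (hBA : B < A)
    (hC : C = (A - 1) / (A - B))
    (hD : D = (1 - B) / (A - B)) :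
    ∀ k : ℕ, 1 ≤ k → ∀ t : ℕ, (k - 1) * τ < t → t ≤ k * τ →
      ‖d t - dk k t‖ ≤ δ *
        (C * (γ * A) ^ (t - (k - 1) * τ) / (γ * (A - 1)) +
         D * (γ * B) ^ (t - (k - 1) * τ) / (γ * (B - 1)) -
         (γ ^ (t - (k - 1) * τ) - 1) / (γ - 1)) := by
  rintro _ hk t ht₁ ht₂
  obtain ⟨k, rfl⟩ : ∃ k', k' + 1 = _ := ⟨_, Nat.sub_add_cancel hk⟩
  obtain ⟨s, rfl⟩ : ∃ s, k * τ + s = t := ⟨t - k * τ, by simp at ht₁; omega⟩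
  obtain ⟨hdk₀, hwk₀⟩ := hk_init (k + 1) hk
  simp only [Nat.add_sub_cancel, Nat.add_sub_cancel_left, add_one_mul] at hdk₀ hwk₀ ht₂ ⊢
  have hts : τ ∣ k * τ := dvd_mul_left τ k
  have hηβ : η * β ≠ 0 := (mul_pos hη hβ).ne'
  have hgrad : ∀ v, gradient Fg v = ∑ i, ρw i • gradient (Floc i) v := fun v => by
    rw [show Fg = _ from funext hFg]
    exact gradient_sum_const_mul _ _ fun i _ => (hdiff i).differentiableAt
  have key := averaged_momentum_descent_gap_le (d := fun i => roundRun d (dtil i) (k * τ))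
    (w := fun i => roundRun w (wtil i) (k * τ)) (s := s)
    (dc := fun r => dk (k + 1) (k * τ + r)) (wc := fun r => wk (k + 1) (k * τ + r))
    hγ0.le hη.le hβ.le mgdMomentumGapCoeff_zero mgdParamGapCoeff_zero
    (mgdMomentumGapCoeff_succ hγ0.ne' hβ.ne' hBA.ne')
    (mgdParamGapCoeff_succ hγ0.ne' hβ.ne' hBA.ne' hA hB)
    (fun i => (hρpos i).le) hρsum hgrad hsmooth hδi
    (fun _ => by simp [hdk₀]) (fun _ => by simp [hwk₀])
    (fun i r _ => roundRun_momentum_step hts (by omega) (hup_d i) (hup_w i))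
    (fun r _ => by
      simpa using hk_up (k + 1) hk (k * τ + (r + 1)) (by simp) (by rw [add_one_mul]; omega))
  rw [sum_smul_roundRun hρsum hdavg, ← hδ, geom_sum_eq hγ1.ne] at key
  rwa [hC, hD, partialFraction_eq_mgdMomentumGapCoeff hγ0.ne' hBA.ne'
    (ne_one_of_charPoly_eq_zero hηβ hA) (ne_one_of_charPoly_eq_zero hηβ hB)]

/-- In the MFL system, for every interval index `k` and every `t` with
`(k−1)τ < t ≤ kτ`, the global MFL momentum and the centralized MGD momentum satisfy
`‖d(t) − d_[k](t)‖ ≤ δ[C(γA)^{t₀}/(γ(A−1)) + D(γB)^{t₀}/(γ(B−1)) − (γ^{t₀}−1)/(γ−1)]`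
with `t₀ = t − (k−1)τ`. -/
theorem mfl_momentum_gap_to_centralized_mgd
    (n N : ℕ) (ρw : Fin N → ℝ) (hρpos : ∀ i, 0 < ρw i) (hρsum : ∑ i, ρw i = 1)
    (Floc : Fin N → EuclideanSpace ℝ (Fin n) → ℝ)
    (hdiff : ∀ i, Differentiable ℝ (Floc i))
    (η β γ : ℝ) (hη : 0 < η) (hβ : 0 < β) (hγ0 : 0 < γ) (hγ1 : γ < 1)
    (hsmooth : ∀ i w₁ w₂, ‖gradient (Floc i) w₁ - gradient (Floc i) w₂‖ ≤ β * ‖w₁ - w₂‖)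
    (Fg : EuclideanSpace ℝ (Fin n) → ℝ)
    (hFg : ∀ v, Fg v = ∑ i, ρw i * Floc i v)
    (δi : Fin N → ℝ)
    (hδi : ∀ i v, ‖gradient Fg v - gradient (Floc i) v‖ ≤ δi i)
    (δ : ℝ) (hδ : δ = ∑ i, ρw i * δi i)
    (τ : ℕ) (hτ : 1 ≤ τ)
    -- MFL local sequences and their weighted averages
    (wtil dtil : Fin N → ℕ → EuclideanSpace ℝ (Fin n))
    (w d : ℕ → EuclideanSpace ℝ (Fin n))
    (hwavg : ∀ t, w t = ∑ i, ρw i • wtil i t)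
    (hdavg : ∀ t, d t = ∑ i, ρw i • dtil i t)
    (hinit : ∀ i, wtil i 0 = w 0 ∧ dtil i 0 = d 0)
    -- local update: nodes are reset to the averages whenever τ ∣ t
    (hup_d : ∀ i, ∀ t : ℕ, dtil i (t + 1) =
      γ • (if τ ∣ t then d t else dtil i t) +
        gradient (Floc i) (if τ ∣ t then w t else wtil i t))
    (hup_w : ∀ i, ∀ t : ℕ, wtil i (t + 1) =
      (if τ ∣ t then w t else wtil i t) - η • dtil i (t + 1))
    -- per-interval centralized MGD sequences
    (wk dk : ℕ → ℕ → EuclideanSpace ℝ (Fin n))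
    (hk_init : ∀ k : ℕ, 1 ≤ k →
      dk k ((k - 1) * τ) = d ((k - 1) * τ) ∧ wk k ((k - 1) * τ) = w ((k - 1) * τ))
    (hk_up : ∀ k : ℕ, 1 ≤ k → ∀ t : ℕ, (k - 1) * τ < t → t ≤ k * τ →
      dk k t = γ • dk k (t - 1) + gradient Fg (wk k (t - 1)) ∧
      wk k t = wk k (t - 1) - η • dk k t)
    -- the roots A > B of γx² − (1+γ+ηβ)x + 1 = 0 and the constants C, D
    (A B C D : ℝ)
    (hA : γ * A ^ 2 - (1 + γ + η * β) * A + 1 = 0)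
    (hB : γ * B ^ 2 - (1 + γ + η * β) * B + 1 = 0)
    (hBA : B < A)
    (hC : C = (A - 1) / (A - B))
    (hD : D = (1 - B) / (A - B)) :
    ∀ k : ℕ, 1 ≤ k → ∀ t : ℕ, (k - 1) * τ < t → t ≤ k * τ →
      ‖d t - dk k t‖ ≤ δ *
        (C * (γ * A) ^ (t - (k - 1) * τ) / (γ * (A - 1)) +
         D * (γ * B) ^ (t - (k - 1) * τ) / (γ * (B - 1)) -
         (γ ^ (t - (k - 1) * τ) - 1) / (γ - 1)) :=
  mfl_momentum_gap_to_centralized_mgd_general n N ρw hρpos hρsum Floc hdiff η β γ hη hβ hγ0 hγ1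
    hsmooth Fg hFg δi hδi δ hδ τ wtil dtil w d hdavg hup_d hup_w wk dk hk_init hk_up A B C D hA hB
    hBA hC hD
end

section
/- The gap function h is nondecreasing on the nonnegative integers: h(x) − h(x−1) ≥ 0 for every integer x ≥ 1, with equality at x = 1. Consequently h(x) ≥ 0 for every integer x ≥ 0. -/
/-!
Put `u = γA` and `v = γB`. Vieta gives `uv = γ` and `(u - 1)(1 - v) = ηβ`, so `0 < v < 1 < u`, and
`E, F` become `u / ((u - v)(u - 1))`, `v / ((u - v)(1 - v))`. Summing geometric series, `h` is the
partial sum `h x = ηδ ∑_{k<x} d_k` of the increments `d_k = ∑_{i≤k} (u^i v^(k-i) - (uv)^i)`, with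
`d_0 = 0`. Pairing `i` with `k - i` gives `2 d_k = ∑_{i≤k} (u^(k-i) - u^i)(v^i - v^(k-i))`, and
every term is `≥ 0` because `n ↦ u^n` increases while `n ↦ v^n` decreases.
-/

open Finset

section Sums

variable {u v : ℝ}

lemma mul_pow_sub_pow_nonneg (hu : 1 ≤ u) (hv0 : 0 ≤ v) (hv1 : v ≤ 1) (a b : ℕ) :
    0 ≤ (u ^ a - u ^ b) * (v ^ b - v ^ a) := by
  rcases le_total a b with hab | hab
  · exact mul_nonneg_of_nonpos_of_nonpos (sub_nonpos.mpr (pow_le_pow_right₀ hu hab))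
      (sub_nonpos.mpr (pow_le_pow_of_le_one hv0 hv1 hab))
  · exact mul_nonneg (sub_nonneg.mpr (pow_le_pow_right₀ hu hab))
      (sub_nonneg.mpr (pow_le_pow_of_le_one hv0 hv1 hab))

lemma sum_range_mul_pow_le_sum_pow_mul_pow (hu : 1 ≤ u) (hv0 : 0 ≤ v) (hv1 : v ≤ 1) (n : ℕ) :
    ∑ i ∈ range (n + 1), (u * v) ^ i ≤ ∑ i ∈ range (n + 1), u ^ i * v ^ (n - i) := by
  have reflect (f : ℕ → ℝ) : ∑ i ∈ range (n + 1), f (n - i) = ∑ i ∈ range (n + 1), f i := by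
    simpa using sum_range_reflect f (n + 1)
  have hswap :
      ∑ i ∈ range (n + 1), u ^ (n - i) * v ^ i = ∑ i ∈ range (n + 1), u ^ i * v ^ (n - i) := by
    rw [← reflect]
    refine sum_congr rfl fun i hi => ?_
    rw [Nat.sub_sub_self (Nat.le_of_lt_succ (mem_range.mp hi))]
  have hpaired : 2 * (∑ i ∈ range (n + 1), u ^ i * v ^ (n - i) - ∑ i ∈ range (n + 1), (u * v) ^ i) =
      ∑ i ∈ range (n + 1), (u ^ (n - i) - u ^ i) * (v ^ i - v ^ (n - i)) := by
    calc _ = ∑ i ∈ range (n + 1), (u ^ (n - i) * v ^ i + u ^ i * v ^ (n - i)) -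
          ∑ i ∈ range (n + 1), ((u * v) ^ (n - i) + (u * v) ^ i) := by
            rw [sum_add_distrib, sum_add_distrib, hswap, reflect]; ring
      _ = _ := by
            rw [← sum_sub_distrib]
            exact sum_congr rfl fun i _ => by ring
  have hterms := sum_nonneg fun i (_ : i ∈ range (n + 1)) =>
    mul_pow_sub_pow_nonneg hu hv0 hv1 (n - i) i
  linarith

end Sums

section ClosedForm

variable {u v γ : ℝ}

lemma sum_range_geom_sum₂_eq (huv : u ≠ v) (hu : u ≠ 1) (hv : v ≠ 1) (x : ℕ) :
    ∑ k ∈ range x, ∑ i ∈ range (k + 1), u ^ i * v ^ (k - i) =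
      u / ((u - v) * (u - 1)) * u ^ x + v / ((u - v) * (1 - v)) * v ^ x -
        1 / ((u - 1) * (1 - v)) := by
  have huv' : u - v ≠ 0 := sub_ne_zero.mpr huv
  have hu' : u - 1 ≠ 0 := sub_ne_zero.mpr hu
  have hv' : 1 - v ≠ 0 := sub_ne_zero.mpr hv.symm
  induction x with
  | zero => field_simp; ring
  | succ k ih =>
    have hgeom :
        ∑ i ∈ range (k + 1), u ^ i * v ^ (k - i) = (u ^ (k + 1) - v ^ (k + 1)) / (u - v) := by
      rw [eq_div_iff huv', ← geom_sum₂_mul, Nat.add_sub_cancel]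
    rw [sum_range_succ, ih, hgeom]
    field_simp
    ring

lemma sum_range_geom_sum_eq (hγ : γ ≠ 1) (x : ℕ) :
    ∑ k ∈ range x, ∑ i ∈ range (k + 1), γ ^ i =
      (γ * (γ ^ x - 1) - (γ - 1) * (x : ℝ)) / (γ - 1) ^ 2 := by
  have hγ' : γ - 1 ≠ 0 := sub_ne_zero.mpr hγ
  induction x with
  | zero => simp
  | succ k ih =>
    rw [sum_range_succ, ih, geom_sum_eq hγ]
    push_cast
    field_simp
    ring

def gapIncrement (u v : ℝ) (k : ℕ) : ℝ :=
  ∑ i ∈ range (k + 1), (u ^ i * v ^ (k - i) - (u * v) ^ i)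

lemma gapIncrement_zero (u v : ℝ) : gapIncrement u v 0 = 0 := by
  simp [gapIncrement]

lemma gapIncrement_nonneg (hu : 1 ≤ u) (hv0 : 0 ≤ v) (hv1 : v ≤ 1) (k : ℕ) :
    0 ≤ gapIncrement u v k := by
  rw [gapIncrement, sum_sub_distrib, sub_nonneg]
  exact sum_range_mul_pow_le_sum_pow_mul_pow hu hv0 hv1 k

lemma sum_range_gapIncrement_eq (huv : u * v = γ) (hγ : γ ≠ 1) (hu : 1 < u) (hv : v < 1) (x : ℕ) :
    ∑ k ∈ range x, gapIncrement u v k =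
      u / ((u - v) * (u - 1)) * u ^ x + v / ((u - v) * (1 - v)) * v ^ x - 1 / ((u - 1) * (1 - v)) -
        (γ * (γ ^ x - 1) - (γ - 1) * (x : ℝ)) / (γ - 1) ^ 2 := by
  simp only [gapIncrement, sum_sub_distrib, huv]
  rw [sum_range_geom_sum₂_eq (by linarith) hu.ne' hv.ne, sum_range_geom_sum_eq hγ]

end ClosedForm

lemma scaled_roots_of_quadratic {γ s A B : ℝ} (hγ : 0 < γ) (hs : 0 < s)
    (hA : γ * A ^ 2 - (1 + γ + s) * A + 1 = 0) (hB : γ * B ^ 2 - (1 + γ + s) * B + 1 = 0)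
    (hBA : B < A) :
    γ * A * (γ * B) = γ ∧ (γ * A - 1) * (1 - γ * B) = s ∧ 0 < γ * B ∧ γ * B < 1 ∧ 1 < γ * A := by
  have hsum : γ * (A + B) = 1 + γ + s := by
    have hfactor : (A - B) * (γ * (A + B) - (1 + γ + s)) = 0 := by linear_combination hA - hB
    linarith [(mul_eq_zero.mp hfactor).resolve_left (sub_ne_zero.mpr hBA.ne')]
  have hprod : γ * (A * B) = 1 := by linear_combination A * hsum - hA
  have hB0 : 0 < B := by nlinarith
  have hkey : (γ * A - 1) * (1 - γ * B) = s := by linear_combination hsum - γ * hprod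
  have hvu : γ * B < γ * A := by nlinarith
  have hu1 : 1 < γ * A := by nlinarith
  refine ⟨by linear_combination γ * hprod, hkey, by positivity, by nlinarith, hu1⟩

/-- The gap function `h` is nondecreasing on the nonnegative integers:
`h(x) − h(x−1) ≥ 0` for every integer `x ≥ 1`, with equality at `x = 1`; consequently
`h(x) ≥ 0` for every integer `x ≥ 0`. -/
theorem gap_function_nondecreasing_and_nonneg
    (η β γ δ A B E F : ℝ)
    (hη : 0 < η) (hβ : 0 < β) (hγ0 : 0 < γ) (hγ1 : γ < 1) (hδ : 0 ≤ δ)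
    (hA : γ * A ^ 2 - (1 + γ + η * β) * A + 1 = 0)
    (hB : γ * B ^ 2 - (1 + γ + η * β) * B + 1 = 0)
    (hBA : B < A)
    (hE : E = A / ((A - B) * (γ * A - 1)))
    (hF : F = B / ((A - B) * (1 - γ * B)))
    (h : ℕ → ℝ)
    (hh : ∀ x : ℕ, h x = η * δ *
      (E * (γ * A) ^ x + F * (γ * B) ^ x - 1 / (η * β) -
        (γ * (γ ^ x - 1) - (γ - 1) * (x : ℝ)) / (γ - 1) ^ 2)) :
    (∀ x : ℕ, 1 ≤ x → 0 ≤ h x - h (x - 1)) ∧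
    h 1 - h 0 = 0 ∧
    (∀ x : ℕ, 0 ≤ h x) := by
  obtain ⟨huv, hs, hv0, hv1, hu1⟩ := scaled_roots_of_quadratic hγ0 (mul_pos hη hβ) hA hB hBA
  have hE' : E = γ * A / ((γ * A - γ * B) * (γ * A - 1)) := by
    rw [hE, ← mul_sub, mul_assoc, mul_div_mul_left _ _ hγ0.ne']
  have hF' : F = γ * B / ((γ * A - γ * B) * (1 - γ * B)) := by
    rw [hF, ← mul_sub, mul_assoc, mul_div_mul_left _ _ hγ0.ne']
  have hclosed (x : ℕ) : h x = η * δ * ∑ k ∈ range x, gapIncrement (γ * A) (γ * B) k := by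
    rw [hh, hE', hF', ← hs, sum_range_gapIncrement_eq huv hγ1.ne hu1 hv1]
  have hηδ : 0 ≤ η * δ := mul_nonneg hη.le hδ
  refine ⟨fun x hx => ?_, ?_, fun x => ?_⟩
  · obtain ⟨k, rfl⟩ := Nat.exists_eq_add_of_le' hx
    rw [hclosed, hclosed, Nat.add_sub_cancel, sum_range_succ, mul_add, add_sub_cancel_left]
    exact mul_nonneg hηδ (gapIncrement_nonneg hu1.le hv0.le hv1.le k)
  · simp [hclosed, gapIncrement_zero]
  · rw [hclosed]
    exact mul_nonneg hηδ (sum_nonneg fun k _ => gapIncrement_nonneg hu1.le hv0.le hv1.le k)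
end

section
/- For every integer i ≥ 0, C(γA)^i + D(γB)^i ≥ (1 + ηβ)^i, with equality for i = 0 and i = 1. -/
/-!
Both roots are positive and separated by `1`, so `C` and `D` are convex weights, and Vieta's
formulas give `C (γA) + D (γB) = 1 + ηβ`. The inequality is then Jensen's inequality for the
convex function `x ↦ x ^ i` on `[0, ∞)`, with equality for `i ≤ 1` because that map is affine.
-/

open Set

theorem quadratic_vieta {K : Type*} [Field K] {a b c x y : K}
    (hx : a * x ^ 2 + b * x + c = 0) (hy : a * y ^ 2 + b * y + c = 0) (hxy : x ≠ y) :
    a * (x + y) = -b ∧ a * (x * y) = c := by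
  have hsum : a * (x + y) = -b := by
    have h : (x - y) * (a * (x + y) + b) = 0 := by linear_combination hx - hy
    linear_combination (mul_eq_zero.1 h).resolve_left (sub_ne_zero.2 hxy)
  exact ⟨hsum, by linear_combination x * hsum - hx⟩

theorem roots_pos_and_separated_by_one {γ t A B : ℝ} (hγ : 0 < γ) (ht : 0 < t)
    (hsum : γ * (A + B) = 1 + γ + t) (hprod : γ * (A * B) = 1) (hBA : B < A) :
    0 < B ∧ B < 1 ∧ 1 < A := by
  have hAB : 0 < A * B := pos_of_mul_pos_right (hprod ▸ one_pos) hγ.le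
  have hApB : 0 < A + B := pos_of_mul_pos_right (by linarith) hγ.le
  have hB : 0 < B := by nlinarith
  have hsep : γ * ((A - 1) * (1 - B)) = t := by linear_combination hsum - hprod
  have hsep_pos : 0 < (A - 1) * (1 - B) := pos_of_mul_pos_right (hsep ▸ ht) hγ.le
  exact ⟨hB, by nlinarith, by nlinarith⟩

theorem jensen_root_power_bound_general
    (η β γ A B C D : ℝ)
    (hη : 0 < η) (hβ : 0 < β) (hγ0 : 0 < γ)
    (hA : γ * A ^ 2 - (1 + γ + η * β) * A + 1 = 0)
    (hB : γ * B ^ 2 - (1 + γ + η * β) * B + 1 = 0)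
    (hBA : B < A)
    (hC : C = (A - 1) / (A - B))
    (hD : D = (1 - B) / (A - B)) :
    (∀ i : ℕ, (1 + η * β) ^ i ≤ C * (γ * A) ^ i + D * (γ * B) ^ i) ∧
    C * (γ * A) ^ (0 : ℕ) + D * (γ * B) ^ (0 : ℕ) = (1 + η * β) ^ (0 : ℕ) ∧
    C * (γ * A) ^ (1 : ℕ) + D * (γ * B) ^ (1 : ℕ) = (1 + η * β) ^ (1 : ℕ) := by
  obtain ⟨hsum, hprod⟩ := quadratic_vieta (a := γ) (x := A) (y := B) (b := -(1 + γ + η * β)) (c := 1)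
    (by linear_combination hA) (by linear_combination hB) hBA.ne'
  obtain ⟨hB0, hB1, hA1⟩ :=
    roots_pos_and_separated_by_one hγ0 (mul_pos hη hβ) (by linear_combination hsum) hprod hBA
  have hAB : A - B ≠ 0 := sub_ne_zero.2 hBA.ne'
  have hCD : C + D = 1 := by rw [hC, hD]; field_simp; ring
  have hmean : C * (γ * A) + D * (γ * B) = 1 + η * β := by
    rw [hC, hD]; field_simp; linear_combination (A - B) * hsum
  have hC0 : 0 ≤ C := hC ▸ div_nonneg (by linarith) (by linarith)
  have hD0 : 0 ≤ D := hD ▸ div_nonneg (by linarith) (by linarith)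
  refine ⟨fun i => ?_, by simp [hCD], by simpa using hmean⟩
  rw [← hmean]
  exact (convexOn_pow i).2 (mem_Ici.2 (by positivity)) (mem_Ici.2 (by positivity)) hC0 hD0 hCD

/-- For every integer `i ≥ 0`, `C(γA)^i + D(γB)^i ≥ (1 + ηβ)^i`, with
equality for `i = 0` and `i = 1`. -/
theorem jensen_root_power_bound
    (η β γ A B C D : ℝ)
    (hη : 0 < η) (hβ : 0 < β) (hγ0 : 0 < γ) (hγ1 : γ < 1)
    (hA : γ * A ^ 2 - (1 + γ + η * β) * A + 1 = 0)
    (hB : γ * B ^ 2 - (1 + γ + η * β) * B + 1 = 0)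
    (hBA : B < A)
    (hC : C = (A - 1) / (A - B))
    (hD : D = (1 - B) / (A - B)) :
    (∀ i : ℕ, (1 + η * β) ^ i ≤ C * (γ * A) ^ i + D * (γ * B) ^ i) ∧
    C * (γ * A) ^ (0 : ℕ) + D * (γ * B) ^ (0 : ℕ) = (1 + η * β) ^ (0 : ℕ) ∧
    C * (γ * A) ^ (1 : ℕ) + D * (γ * B) ^ (1 : ℕ) = (1 + η * β) ^ (1 : ℕ) :=
  jensen_root_power_bound_general η β γ A B C D hη hβ hγ0 hA hB hBA hC hD
end

section
/- Let F : ℝ^n → ℝ be differentiable and β-smooth (‖∇F(w₁) − ∇F(w₂)‖ ≤ β‖w₁ − w₂‖ for all w₁, w₂). Let w, d ∈ ℝ^n, and consider one momentum gradient descent step d' = γd + ∇F(w), w' = w − ηd'. Suppose 0 < ηβ < 1, 0 ≤ γ < 1, and there exist constants p ≥ 0 and c ≥ 0 with ‖d‖ ≤ p‖∇F(w)‖ and ⟨∇F(w), d⟩ ≥ c‖∇F(w)‖². Then F(w') − F(w) ≤ −α‖∇F(w)‖², where α = η(1 − βη/2) + ηγ(1 − βη)c − βη²γ²p²/2. -/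
/-!
The descent inequality reduces one step to a quadratic upper model of `F` along `w' - w`;
substituting `w' - w = -η(γd + ∇F(w))` and expanding, the cross term `⟨∇F(w), d⟩` enters with
coefficient `-ηγ(1 - βη) ≤ 0` and `‖d‖²` with coefficient `βη²γ²/2 ≥ 0`, so the two hypotheses
on `d` bound them by multiples of `‖∇F(w)‖²`.
-/

open Set
open scoped RealInnerProductSpace

variable {E : Type*} [NormedAddCommGroup E] [InnerProductSpace ℝ E]

theorem Differentiable.hasDerivAt_comp_add_smul [CompleteSpace E] {F : E → ℝ}
    (hF : Differentiable ℝ F) (x v : E) (t : ℝ) :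
    HasDerivAt (fun s : ℝ => F (x + s • v)) ⟪gradient F (x + t • v), v⟫ t := by
  have hline : HasDerivAt (fun s : ℝ => x + s • v) v t := by
    simpa using ((hasDerivAt_id t).smul_const v).const_add x
  rw [inner_gradient_left]
  exact (hF _).hasFDerivAt.comp_hasDerivAt t hline

theorem sub_le_inner_gradient_add_of_gradient_lipschitz [CompleteSpace E] {F : E → ℝ} {β : ℝ}
    (hF : Differentiable ℝ F) (hsmooth : ∀ x y, ‖gradient F x - gradient F y‖ ≤ β * ‖x - y‖)
    (x v : E) :
    F (x + v) - F x ≤ ⟪gradient F x, v⟫ + β / 2 * ‖v‖ ^ 2 := by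
  -- the gap to the quadratic model, antitone on `t ≥ 0` because the gradient is `β`-Lipschitz
  set ψ : ℝ → ℝ := fun t =>
    F (x + t • v) - t * ⟪gradient F x, v⟫ - β / 2 * t ^ 2 * ‖v‖ ^ 2
  have hψ' (t : ℝ) : HasDerivAt ψ
      (⟪gradient F (x + t • v) - gradient F x, v⟫ - β * t * ‖v‖ ^ 2) t := by
    refine (((hF.hasDerivAt_comp_add_smul x v t).sub ((hasDerivAt_id t).mul_const
      ⟪gradient F x, v⟫)).sub (((hasDerivAt_pow 2 t).const_mul (β / 2)).mul_const
      (‖v‖ ^ 2))).congr_deriv ?_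
    rw [inner_sub_left]
    simp only [Nat.cast_ofNat]
    ring
  have hψ'_nonpos (t : ℝ) (ht : t ∈ interior (Ici 0)) :
      ⟪gradient F (x + t • v) - gradient F x, v⟫ - β * t * ‖v‖ ^ 2 ≤ 0 := by
    rw [interior_Ici, mem_Ioi] at ht
    have hlip : ‖gradient F (x + t • v) - gradient F x‖ ≤ β * (t * ‖v‖) := by
      simpa [norm_smul, abs_of_pos ht] using hsmooth (x + t • v) x
    have := real_inner_le_norm (gradient F (x + t • v) - gradient F x) v
    nlinarith [mul_le_mul_of_nonneg_right hlip (norm_nonneg v)]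
  have hanti : AntitoneOn ψ (Ici 0) :=
    antitoneOn_of_hasDerivWithinAt_nonpos (convex_Ici 0)
      (fun t _ => (hψ' t).continuousAt.continuousWithinAt)
      (fun t _ => (hψ' t).hasDerivWithinAt) hψ'_nonpos
  have := hanti self_mem_Ici (mem_Ici.2 zero_le_one) zero_le_one
  simp only [ψ, zero_smul, add_zero, one_smul] at this
  linarith

theorem nonneg_of_forall_norm_sub_le_mul {E G : Type*} [NormedAddCommGroup E] [Nontrivial E]
    [SeminormedAddCommGroup G] {f : E → G} {β : ℝ} (hf : ∀ x y, ‖f x - f y‖ ≤ β * ‖x - y‖) :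
    0 ≤ β := by
  obtain ⟨x, y, hxy⟩ := exists_pair_ne E
  exact nonneg_of_mul_nonneg_left ((norm_nonneg _).trans (hf x y))
    (norm_pos_iff.2 (sub_ne_zero.2 hxy))

theorem inner_neg_momentum_step_add_sq_le {g d : E} {β η γ p c : ℝ} (hβ : 0 ≤ β) (hη : 0 ≤ η)
    (hγ : 0 ≤ γ) (hβη : β * η ≤ 1) (hdb : ‖d‖ ≤ p * ‖g‖) (hinner : c * ‖g‖ ^ 2 ≤ ⟪g, d⟫) :
    ⟪g, -(η • (γ • d + g))⟫ + β / 2 * ‖-(η • (γ • d + g))‖ ^ 2 ≤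
      -(η * (1 - β * η / 2) + η * γ * (1 - β * η) * c - β * η ^ 2 * γ ^ 2 * p ^ 2 / 2) *
        ‖g‖ ^ 2 := by
  have hexpand : ⟪g, -(η • (γ • d + g))⟫ + β / 2 * ‖-(η • (γ • d + g))‖ ^ 2 =
      -(η * (1 - β * η / 2)) * ‖g‖ ^ 2 - η * γ * (1 - β * η) * ⟪g, d⟫
        + β * η ^ 2 * γ ^ 2 / 2 * ‖d‖ ^ 2 := by
    rw [norm_neg, norm_smul, mul_pow, norm_add_sq_real, norm_smul, inner_neg_right,
      inner_smul_right, inner_add_right, inner_smul_right, inner_smul_left,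
      real_inner_self_eq_norm_sq, real_inner_comm d g, Real.norm_eq_abs, Real.norm_eq_abs, sq_abs,
      abs_of_nonneg hγ]
    simp only [conj_trivial]
    ring
  have hd_sq : ‖d‖ ^ 2 ≤ p ^ 2 * ‖g‖ ^ 2 := by
    simpa only [mul_pow] using pow_le_pow_left₀ (norm_nonneg d) hdb 2
  have hcross := mul_le_mul_of_nonneg_left hinner
    (mul_nonneg (mul_nonneg hη hγ) (sub_nonneg.2 hβη))
  have hmomentum := mul_le_mul_of_nonneg_left hd_sq
    (show 0 ≤ β * η ^ 2 * γ ^ 2 / 2 by positivity)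
  rw [hexpand]
  linarith

theorem mgd_one_step_descent_general
    (n : ℕ) (F : EuclideanSpace ℝ (Fin n) → ℝ)
    (hdiff : Differentiable ℝ F)
    (β η γ p c α : ℝ)
    (hsmooth : ∀ w₁ w₂, ‖gradient F w₁ - gradient F w₂‖ ≤ β * ‖w₁ - w₂‖)
    (hηβ0 : 0 < η * β) (hηβ1 : η * β < 1)
    (hγ0 : 0 ≤ γ)
    (w d d' w' : EuclideanSpace ℝ (Fin n))
    (hd' : d' = γ • d + gradient F w)
    (hw' : w' = w - η • d')
    (hdb : ‖d‖ ≤ p * ‖gradient F w‖)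
    (hinner : c * ‖gradient F w‖ ^ 2 ≤ (inner ℝ (gradient F w) d : ℝ))
    (hα : α = η * (1 - β * η / 2) + η * γ * (1 - β * η) * c - β * η ^ 2 * γ ^ 2 * p ^ 2 / 2) :
    F w' - F w ≤ -α * ‖gradient F w‖ ^ 2 := by
  rcases subsingleton_or_nontrivial (EuclideanSpace ℝ (Fin n)) with _ | _
  · simp [Subsingleton.elim w' w, Subsingleton.elim (gradient F w) 0]
  have hβ : 0 ≤ β := nonneg_of_forall_norm_sub_le_mul hsmooth
  have hη : 0 ≤ η := (pos_of_mul_pos_left hηβ0 hβ).le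
  have hstep : w' = w + -(η • (γ • d + gradient F w)) := by rw [hw', hd', sub_eq_add_neg]
  rw [hstep, hα]
  exact (sub_le_inner_gradient_add_of_gradient_lipschitz hdiff hsmooth w _).trans
    (inner_neg_momentum_step_add_sq_le hβ hη hγ0 (by linarith) hdb hinner)

/-- One momentum gradient descent step on a β-smooth function decreases
the value: with `d' = γd + ∇F(w)`, `w' = w − ηd'`, `0 < ηβ < 1`, `0 ≤ γ < 1`,
`‖d‖ ≤ p‖∇F(w)‖` and `⟨∇F(w), d⟩ ≥ c‖∇F(w)‖²`, one has
`F(w') − F(w) ≤ −α‖∇F(w)‖²` where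
`α = η(1 − βη/2) + ηγ(1 − βη)c − βη²γ²p²/2`. -/
theorem mgd_one_step_descent
    (n : ℕ) (F : EuclideanSpace ℝ (Fin n) → ℝ)
    (hdiff : Differentiable ℝ F)
    (β η γ p c α : ℝ)
    (hsmooth : ∀ w₁ w₂, ‖gradient F w₁ - gradient F w₂‖ ≤ β * ‖w₁ - w₂‖)
    (hηβ0 : 0 < η * β) (hηβ1 : η * β < 1)
    (hγ0 : 0 ≤ γ) (hγ1 : γ < 1)
    (hp : 0 ≤ p) (hc : 0 ≤ c)
    (w d d' w' : EuclideanSpace ℝ (Fin n))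
    (hd' : d' = γ • d + gradient F w)
    (hw' : w' = w - η • d')
    (hdb : ‖d‖ ≤ p * ‖gradient F w‖)
    (hinner : c * ‖gradient F w‖ ^ 2 ≤ (inner ℝ (gradient F w) d : ℝ))
    (hα : α = η * (1 - β * η / 2) + η * γ * (1 - β * η) * c - β * η ^ 2 * γ ^ 2 * p ^ 2 / 2) :
    F w' - F w ≤ -α * ‖gradient F w‖ ^ 2 :=
  mgd_one_step_descent_general n F hdiff β η γ p c α hsmooth hηβ0 hηβ1 hγ0 w d d' w' hd' hw' hdb
    hinner hα
end

section
/- Fix η > 0, β > 0, δ ≥ 0, and an integer τ ≥ 0, and regard A, B, E, F, and hence h_γ(τ), as functions of the momentum factor γ ∈ (0,1). Then as γ → 0⁺: γA → 1 + ηβ, γB → 0, E → 1/(ηβ), F → 0, and h_γ(τ) → (δ/β)((1 + ηβ)^τ − 1) − ηδτ, i.e., the MFL gap function converges to the FL gap function h_FL(τ). -/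
/-!
Write `c = ηβ`. As `γ → 0` the discriminant `(1 + γ + c)² − 4γ` tends to `(1 + c)²`, so the
rescaled roots `γA` and `γB` tend to `1 + c` and `0`. Multiplying numerator and denominator of `E`
and `F` by `γ` makes both continuous expressions in `γA` and `γB`, with limits `1/c` and `0`, and
the correction term `(γ(γ^τ − 1) − (γ − 1)τ)/(γ − 1)²` is continuous at `0` with value `τ`. Hence
`h_γ(τ) → ηδ((1 + c)^τ/c − 1/c − τ) = h_FL(τ)`.
-/

open Filter Topology

namespace MomentumGap

noncomputable section

variable (c γ : ℝ)

def rootA : ℝ := ((1 + γ + c) + √((1 + γ + c) ^ 2 - 4 * γ)) / (2 * γ)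

def rootB : ℝ := ((1 + γ + c) - √((1 + γ + c) ^ 2 - 4 * γ)) / (2 * γ)

def coeffE : ℝ := rootA c γ / ((rootA c γ - rootB c γ) * (γ * rootA c γ - 1))

def coeffF : ℝ := rootB c γ / ((rootA c γ - rootB c γ) * (1 - γ * rootB c γ))

def mflGap (η β δ γ : ℝ) (x : ℕ) : ℝ :=
  η * δ * (coeffE (η * β) γ * (γ * rootA (η * β) γ) ^ x +
    coeffF (η * β) γ * (γ * rootB (η * β) γ) ^ x - 1 / (η * β) -
      (γ * (γ ^ x - 1) - (γ - 1) * (x : ℝ)) / (γ - 1) ^ 2)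

def flGap (η β δ : ℝ) (τ : ℕ) : ℝ := δ / β * ((1 + η * β) ^ τ - 1) - η * δ * τ

variable {c}

theorem tendsto_sqrt_discriminant (hc : 0 ≤ 1 + c) :
    Tendsto (fun γ : ℝ => √((1 + γ + c) ^ 2 - 4 * γ)) (𝓝 0) (𝓝 (1 + c)) := by
  have hcont : Continuous fun γ : ℝ => √((1 + γ + c) ^ 2 - 4 * γ) := by fun_prop
  simpa [Real.sqrt_sq hc] using hcont.tendsto 0

theorem tendsto_mul_rootA (hc : 0 ≤ 1 + c) :
    Tendsto (fun γ => γ * rootA c γ) (𝓝[≠] 0) (𝓝 (1 + c)) := by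
  have hlim : Tendsto (fun γ : ℝ => ((1 + γ + c) + √((1 + γ + c) ^ 2 - 4 * γ)) / 2)
      (𝓝 0) (𝓝 (((1 + 0 + c) + (1 + c)) / 2)) :=
    ((tendsto_const_nhds.add tendsto_id).add_const c
      |>.add (tendsto_sqrt_discriminant hc)).div_const 2
  rw [show ((1 + 0 + c) + (1 + c)) / 2 = 1 + c by ring] at hlim
  refine (hlim.mono_left nhdsWithin_le_nhds).congr' ?_
  filter_upwards [self_mem_nhdsWithin] with γ (hγ : γ ≠ 0)
  rw [rootA]
  field_simp

theorem tendsto_mul_rootB (hc : 0 ≤ 1 + c) :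
    Tendsto (fun γ => γ * rootB c γ) (𝓝[≠] 0) (𝓝 0) := by
  have hlim : Tendsto (fun γ : ℝ => ((1 + γ + c) - √((1 + γ + c) ^ 2 - 4 * γ)) / 2)
      (𝓝 0) (𝓝 (((1 + 0 + c) - (1 + c)) / 2)) :=
    ((tendsto_const_nhds.add tendsto_id).add_const c
      |>.sub (tendsto_sqrt_discriminant hc)).div_const 2
  rw [show ((1 + 0 + c) - (1 + c)) / 2 = 0 by ring] at hlim
  refine (hlim.mono_left nhdsWithin_le_nhds).congr' ?_
  filter_upwards [self_mem_nhdsWithin] with γ (hγ : γ ≠ 0)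
  rw [rootB]
  field_simp

theorem div_sub_mul_eq_mul_div {x a b d : ℝ} (hγ : γ ≠ 0) :
    x / ((a - b) * d) = γ * x / ((γ * a - γ * b) * d) := by
  rw [← mul_sub, mul_assoc, mul_div_mul_left _ _ hγ]

theorem tendsto_coeffE (hc : 0 < 1 + c) (hc₀ : c ≠ 0) :
    Tendsto (coeffE c) (𝓝[≠] 0) (𝓝 (1 / c)) := by
  have hA := tendsto_mul_rootA hc.le
  have hlim := hA.div ((hA.sub (tendsto_mul_rootB hc.le)).mul (hA.sub_const 1))
    (by simpa using ⟨hc.ne', hc₀⟩)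
  rw [sub_zero, add_sub_cancel_left, div_mul_eq_div_div, div_self hc.ne'] at hlim
  refine hlim.congr' ?_
  filter_upwards [self_mem_nhdsWithin] with γ (hγ : γ ≠ 0)
  rw [Pi.div_apply, coeffE]
  exact (div_sub_mul_eq_mul_div γ hγ).symm

theorem tendsto_coeffF (hc : 0 < 1 + c) :
    Tendsto (coeffF c) (𝓝[≠] 0) (𝓝 0) := by
  have hB := tendsto_mul_rootB hc.le
  have hlim := hB.div (((tendsto_mul_rootA hc.le).sub hB).mul (hB.const_sub 1))
    (by simpa using hc.ne')
  rw [zero_div] at hlim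
  refine hlim.congr' ?_
  filter_upwards [self_mem_nhdsWithin] with γ (hγ : γ ≠ 0)
  rw [Pi.div_apply, coeffF]
  exact (div_sub_mul_eq_mul_div γ hγ).symm

theorem tendsto_momentum_correction (n : ℕ) :
    Tendsto (fun γ : ℝ => (γ * (γ ^ n - 1) - (γ - 1) * (n : ℝ)) / (γ - 1) ^ 2) (𝓝 0) (𝓝 (n : ℝ)) := by
  have hcont : ContinuousAt
      (fun γ : ℝ => (γ * (γ ^ n - 1) - (γ - 1) * (n : ℝ)) / (γ - 1) ^ 2) 0 :=
    by fun_prop (disch := norm_num)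
  simpa using hcont.tendsto

theorem tendsto_mflGap {η β : ℝ} (δ : ℝ) (hη : 0 < η) (hβ : 0 < β) (τ : ℕ) :
    Tendsto (fun γ => mflGap η β δ γ τ) (𝓝[≠] 0) (𝓝 (flGap η β δ τ)) := by
  have hc : 0 < 1 + η * β := by positivity
  have hlim := ((((tendsto_coeffE hc (by positivity)).mul ((tendsto_mul_rootA hc.le).pow τ)).add
    ((tendsto_coeffF hc).mul ((tendsto_mul_rootB hc.le).pow τ))).sub_const (1 / (η * β))).sub
      ((tendsto_momentum_correction τ).mono_left nhdsWithin_le_nhds) |>.const_mul (η * δ)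
  unfold mflGap
  convert hlim using 2
  rw [flGap, zero_mul, add_zero]
  field_simp

end

end MomentumGap

open MomentumGap in
theorem mfl_gap_tends_to_fl_gap_general
    (η β δ : ℝ) (hη : 0 < η) (hβ : 0 < β) (τ : ℕ)
    (A B E F : ℝ → ℝ) (h : ℝ → ℕ → ℝ)
    (hA : ∀ γ : ℝ, A γ =
      ((1 + γ + η * β) + Real.sqrt ((1 + γ + η * β) ^ 2 - 4 * γ)) / (2 * γ))
    (hB : ∀ γ : ℝ, B γ =
      ((1 + γ + η * β) - Real.sqrt ((1 + γ + η * β) ^ 2 - 4 * γ)) / (2 * γ))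
    (hE : ∀ γ : ℝ, E γ = A γ / ((A γ - B γ) * (γ * A γ - 1)))
    (hF : ∀ γ : ℝ, F γ = B γ / ((A γ - B γ) * (1 - γ * B γ)))
    (hh : ∀ γ : ℝ, ∀ x : ℕ, h γ x = η * δ *
      (E γ * (γ * A γ) ^ x + F γ * (γ * B γ) ^ x - 1 / (η * β) -
        (γ * (γ ^ x - 1) - (γ - 1) * (x : ℝ)) / (γ - 1) ^ 2)) :
    Tendsto (fun γ : ℝ => γ * A γ) (𝓝[>] 0) (𝓝 (1 + η * β)) ∧
    Tendsto (fun γ : ℝ => γ * B γ) (𝓝[>] 0) (𝓝 0) ∧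
    Tendsto E (𝓝[>] 0) (𝓝 (1 / (η * β))) ∧
    Tendsto F (𝓝[>] 0) (𝓝 0) ∧
    Tendsto (fun γ : ℝ => h γ τ) (𝓝[>] 0)
      (𝓝 (δ / β * ((1 + η * β) ^ τ - 1) - η * δ * (τ : ℝ))) := by
  obtain rfl : A = rootA (η * β) := funext hA
  obtain rfl : B = rootB (η * β) := funext hB
  obtain rfl : E = coeffE (η * β) := funext hE
  obtain rfl : F = coeffF (η * β) := funext hF
  obtain rfl : h = mflGap η β δ := funext₂ hh
  have hc : 0 < 1 + η * β := by positivity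
  have hGT : 𝓝[>] (0 : ℝ) ≤ 𝓝[≠] 0 := nhdsGT_le_nhdsNE 0
  exact ⟨(tendsto_mul_rootA hc.le).mono_left hGT, (tendsto_mul_rootB hc.le).mono_left hGT,
    (tendsto_coeffE hc (by positivity)).mono_left hGT, (tendsto_coeffF hc).mono_left hGT,
    (tendsto_mflGap δ hη hβ τ).mono_left hGT⟩

/-- As γ → 0⁺ (with η, β, δ, τ fixed): `γA → 1 + ηβ`, `γB → 0`,
`E → 1/(ηβ)`, `F → 0`, and the MFL gap function `h_γ(τ)` converges to the FL gap
function `h_FL(τ) = (δ/β)((1 + ηβ)^τ − 1) − ηδτ`. -/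
theorem mfl_gap_tends_to_fl_gap
    (η β δ : ℝ) (hη : 0 < η) (hβ : 0 < β) (hδ : 0 ≤ δ) (τ : ℕ)
    (A B E F : ℝ → ℝ) (h : ℝ → ℕ → ℝ)
    (hA : ∀ γ : ℝ, A γ =
      ((1 + γ + η * β) + Real.sqrt ((1 + γ + η * β) ^ 2 - 4 * γ)) / (2 * γ))
    (hB : ∀ γ : ℝ, B γ =
      ((1 + γ + η * β) - Real.sqrt ((1 + γ + η * β) ^ 2 - 4 * γ)) / (2 * γ))
    (hE : ∀ γ : ℝ, E γ = A γ / ((A γ - B γ) * (γ * A γ - 1)))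
    (hF : ∀ γ : ℝ, F γ = B γ / ((A γ - B γ) * (1 - γ * B γ)))
    (hh : ∀ γ : ℝ, ∀ x : ℕ, h γ x = η * δ *
      (E γ * (γ * A γ) ^ x + F γ * (γ * B γ) ^ x - 1 / (η * β) -
        (γ * (γ ^ x - 1) - (γ - 1) * (x : ℝ)) / (γ - 1) ^ 2)) :
    Tendsto (fun γ : ℝ => γ * A γ) (𝓝[>] 0) (𝓝 (1 + η * β)) ∧
    Tendsto (fun γ : ℝ => γ * B γ) (𝓝[>] 0) (𝓝 0) ∧
    Tendsto E (𝓝[>] 0) (𝓝 (1 / (η * β))) ∧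
    Tendsto F (𝓝[>] 0) (𝓝 0) ∧
    Tendsto (fun γ : ℝ => h γ τ) (𝓝[>] 0)
      (𝓝 (δ / β * ((1 + η * β) ^ τ - 1) - η * δ * (τ : ℝ))) :=
  mfl_gap_tends_to_fl_gap_general η β δ hη hβ τ A B E F h hA hB hE hF hh
end
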